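/- Let β = (π_ℓ)_{ℓ=1}^L with π_ℓ = (a_ℓ, b_ℓ, c_ℓ, d_ℓ) be a chainable architecture of depth L ≥ 2. Then π₁ * ⋯ * π_L = (a₁, b₁d₁/d_L, a_Lc_L/a₁, d_L), and every product X₁⋯X_L with X_ℓ ∈ D^{π_ℓ} for each ℓ is a (π₁ * ⋯ * π_L)-factor; in particular B^β ⊆ D^{π₁ * ⋯ * π_L}. -/

import Mathlib

/-- A *pattern* is a tuple `(a, b, c, d)` of (positive) natural numbers. -/
structure Pattern where
  a : ℕ
  b : ℕ
  c : ℕ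
  d : ℕ

namespace Pattern

/-- The entries of a pattern are positive integers. -/
def Pos (π : Pattern) : Prop := 0 < π.a ∧ 0 < π.b ∧ 0 < π.c ∧ 0 < π.d

/-- Number of rows `a*b*d` of a `π`-factor. -/
def rows (π : Pattern) : ℕ := π.a * π.b * π.d

/-- Number of columns `a*c*d` of a `π`-factor. -/
def cols (π : Pattern) : ℕ := π.a * π.c * π.d

/-- `r(π₁, π₂) = a₁c₁/a₂ (= b₂d₂/d₁)`. -/
def rk (π₁ π₂ : Pattern) : ℕ := π₁.a * π₁.c / π₂.a

/-- A pair of patterns is *chainable* if `a₁c₁/a₂ = b₂d₂/d₁` is a positive integer,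
`a₁ ∣ a₂` and `d₂ ∣ d₁`. -/
def Chainable (π₁ π₂ : Pattern) : Prop :=
  π₂.a ∣ π₁.a * π₁.c ∧ π₁.d ∣ π₂.b * π₂.d ∧
    π₁.a * π₁.c / π₂.a = π₂.b * π₂.d / π₁.d ∧
    0 < π₁.a * π₁.c / π₂.a ∧ π₁.a ∣ π₂.a ∧ π₂.d ∣ π₁.d

/-- `π₁ * π₂ := (a₁, b₁d₁/d₂, a₂c₂/a₁, d₂)`. -/
instance : Mul Pattern :=
  ⟨fun π₁ π₂ => ⟨π₁.a, π₁.b * π₁.d / π₂.d, π₂.a * π₂.c / π₁.a, π₂.d⟩⟩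

/-- `‖π‖₀ := a*b*c*d`. -/
def norm0 (π : Pattern) : ℕ := π.a * π.b * π.c * π.d

end Pattern

open scoped Kronecker

/-- The flattening equivalence `(Fin a × Fin b) × Fin d ≃ Fin (a*b*d)`. -/
def kron3Equiv (a b d : ℕ) : (Fin a × Fin b) × Fin d ≃ Fin (a * b * d) :=
  (finProdFinEquiv.prodCongr (Equiv.refl (Fin d))).trans finProdFinEquiv

/-- The support matrix `S_π = I_a ⊗ 1_{b×c} ⊗ I_d ∈ {0,1}^{abd × acd}`. -/
def Pattern.S (π : Pattern) : Matrix (Fin π.rows) (Fin π.cols) ℕ :=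
  Matrix.reindex (kron3Equiv π.a π.b π.d) (kron3Equiv π.a π.c π.d)
    ((1 : Matrix (Fin π.a) (Fin π.a) ℕ) ⊗ₖ
      (Matrix.of fun _ _ => (1 : ℕ) : Matrix (Fin π.b) (Fin π.c) ℕ) ⊗ₖ
      (1 : Matrix (Fin π.d) (Fin π.d) ℕ))

/-- The support matrix `S_π`, extended by zero to an `ℕ × ℕ`-indexed array. -/
def SpatN (π : Pattern) : ℕ → ℕ → ℕ := fun i j =>
  if h : i < π.rows ∧ j < π.cols then π.S ⟨i, h.1⟩ ⟨j, h.2⟩ else 0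

/-- `X` is (the extension by zero of) a `π`-factor: it vanishes outside the support of `S_π`. -/
def IsFactorN (π : Pattern) (X : ℕ → ℕ → ℂ) : Prop :=
  ∀ i j, SpatN π i j = 0 → X i j = 0

/-- Product of matrices encoded as finitely supported `ℕ × ℕ`-indexed arrays. -/
noncomputable def nmul (f g : ℕ → ℕ → ℂ) : ℕ → ℕ → ℂ := fun i j => ∑' k, f i k * g k j

/-- `nprod X k = X 0 * X 1 * ⋯ * X k`. -/
noncomputable def nprod (X : ℕ → ℕ → ℕ → ℂ) : ℕ → ℕ → ℕ → ℂ
  | 0 => X 0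
  | k + 1 => nmul (nprod X k) (X (k + 1))

/-- Frobenius norm. -/
noncomputable def nfrob (f : ℕ → ℕ → ℂ) : ℝ := Real.sqrt (∑' i, ∑' j, ‖f i j‖ ^ 2)

/-- `A` is (the extension by zero of) a matrix of size `m × n`. -/
def SuppIn (m n : ℕ) (A : ℕ → ℕ → ℂ) : Prop := ∀ i j, A i j ≠ 0 → i < m ∧ j < n

/-- Partial products of patterns: `pprod π q k = π q * π (q+1) * ⋯ * π (q+k)`. -/
def pprod (π : ℕ → Pattern) (q : ℕ) : ℕ → Pattern
  | 0 => π q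
  | k + 1 => pprod π q k * π (q + k + 1)

/-! `S_π[i, j] ≠ 0` exactly when `i ≡ j (mod d)` and `i / (b d) = j / (c d)`: row block and
column block agree. For a chainable pair, `d₂ ∣ d₁` transports the congruence, and
`c₁ d₁ = (a₂ / a₁) · b₂ d₂` says that each column block of `π₁` is a union of `a₂ / a₁`
consecutive row blocks of `π₂`; so the supports compose into that of `π₁ * π₂`, and so do the
factors. Since `π₁ * π₂` has the `a · c` and the `d` of `π₂`, it is again chainable with `π₃`,
and induction on the depth gives both the closed form and the factor property. -/

lemma spatN_ne_zero_iff (π : Pattern) (i j : ℕ) :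
    SpatN π i j ≠ 0 ↔ i < π.rows ∧ j < π.cols ∧ i % π.d = j % π.d ∧
      i / (π.b * π.d) = j / (π.c * π.d) := by
  unfold SpatN
  split_ifs with h
  · dsimp only [Pattern.rows, Pattern.cols] at h ⊢
    simp only [Pattern.S, kron3Equiv, Matrix.reindex_apply, Equiv.symm_trans_apply,
      Equiv.prodCongr_symm, Equiv.refl_symm, Equiv.prodCongr_apply, Equiv.coe_refl,
      finProdFinEquiv_symm_apply, Prod.map, Matrix.submatrix_apply,
      Matrix.kroneckerMap_apply, Matrix.one_apply, Fin.divNat, Fin.modNat, Fin.ext_iff]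
    simp [h, Nat.div_div_eq_div_mul, Nat.mul_comm π.d]
  · simp_all

lemma IsFactorN.nmul_of_spatN {π₁ π₂ π : Pattern} {X Y : ℕ → ℕ → ℂ}
    (hX : IsFactorN π₁ X) (hY : IsFactorN π₂ Y)
    (hS : ∀ i k j, SpatN π₁ i k ≠ 0 → SpatN π₂ k j ≠ 0 → SpatN π i j ≠ 0) :
    IsFactorN π (nmul X Y) := by
  intro i j hij
  have hterm : ∀ k, X i k * Y k j = 0 := fun k => by
    by_contra hk
    obtain ⟨hx, hy⟩ := mul_ne_zero_iff.mp hk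
    exact hS i k j (mt (hX i k) hx) (mt (hY k j) hy) hij
  simp [nmul, hterm]

namespace Pattern

variable {π₁ π₂ π₃ : Pattern}

@[simp] lemma mul_a : (π₁ * π₂).a = π₁.a := rfl

@[simp] lemma mul_c : (π₁ * π₂).c = π₂.a * π₂.c / π₁.a := rfl

@[simp] lemma mul_d : (π₁ * π₂).d = π₂.d := rfl

namespace Chainable

lemma a_pos (h : Chainable π₁ π₂) : 0 < π₁.a := by
  obtain ⟨-, -, -, hr, -, -⟩ := h
  refine Nat.pos_of_ne_zero fun ha => ?_
  simp [ha] at hr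

lemma mul_b_mul_d (h : Chainable π₁ π₂) : (π₁ * π₂).b * (π₁ * π₂).d = π₁.b * π₁.d :=
  Nat.div_mul_cancel (h.2.2.2.2.2.trans (dvd_mul_left _ _))

lemma mul_a_mul_c (h : Chainable π₁ π₂) : (π₁ * π₂).a * (π₁ * π₂).c = π₂.a * π₂.c :=
  Nat.mul_div_cancel' (h.2.2.2.2.1.trans (dvd_mul_right _ _))

lemma mul_c_mul_d (h : Chainable π₁ π₂) :
    (π₁ * π₂).c * (π₁ * π₂).d = π₂.a / π₁.a * (π₂.c * π₂.d) := by
  rw [mul_c, mul_d, ← Nat.div_mul_right_comm h.2.2.2.2.1, mul_assoc]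

lemma c_mul_d (h : Chainable π₁ π₂) : π₁.c * π₁.d = π₂.a / π₁.a * (π₂.b * π₂.d) := by
  have ha₁ := h.a_pos
  obtain ⟨hac, hbd, hr, -, ha, -⟩ := h
  have hm : π₁.a * (π₂.a / π₁.a) = π₂.a := Nat.mul_div_cancel' ha
  have hr₁ : π₂.a * (π₁.a * π₁.c / π₂.a) = π₁.a * π₁.c := Nat.mul_div_cancel' hac
  have hr₂ : π₁.d * (π₂.b * π₂.d / π₁.d) = π₂.b * π₂.d := Nat.mul_div_cancel' hbd
  apply Nat.eq_of_mul_eq_mul_left ha₁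
  calc π₁.a * (π₁.c * π₁.d) = π₂.a * (π₁.a * π₁.c / π₂.a) * π₁.d := by rw [hr₁]; ring
    _ = π₂.a * (π₁.d * (π₂.b * π₂.d / π₁.d)) := by rw [hr]; ring
    _ = π₁.a * (π₂.a / π₁.a) * (π₂.b * π₂.d) := by rw [hr₂, hm]
    _ = π₁.a * (π₂.a / π₁.a * (π₂.b * π₂.d)) := by ring

lemma mul_rows (h : Chainable π₁ π₂) : (π₁ * π₂).rows = π₁.rows := by
  rw [rows, mul_assoc, h.mul_b_mul_d, mul_a, rows, mul_assoc]

lemma mul_cols (h : Chainable π₁ π₂) : (π₁ * π₂).cols = π₂.cols := by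
  rw [cols, h.mul_a_mul_c, mul_d, cols]

lemma mul_left (h₁₂ : Chainable π₁ π₂) (h₂₃ : Chainable π₂ π₃) : Chainable (π₁ * π₂) π₃ := by
  obtain ⟨hac, hbd, hr, hpos, ha, hd⟩ := h₂₃
  rw [Chainable, h₁₂.mul_a_mul_c, mul_a, mul_d]
  exact ⟨hac, hbd, hr, hpos, h₁₂.2.2.2.2.1.trans ha, hd⟩

lemma spatN_mul_ne_zero (h : Chainable π₁ π₂) {i k j : ℕ}
    (h₁ : SpatN π₁ i k ≠ 0) (h₂ : SpatN π₂ k j ≠ 0) : SpatN (π₁ * π₂) i j ≠ 0 := by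
  rw [spatN_ne_zero_iff] at h₁ h₂ ⊢
  obtain ⟨hi, -, hm₁, hq₁⟩ := h₁
  obtain ⟨-, hj, hm₂, hq₂⟩ := h₂
  have hd : π₂.d ∣ π₁.d := h.2.2.2.2.2
  refine ⟨h.mul_rows ▸ hi, h.mul_cols ▸ hj, ?_, ?_⟩
  · rw [mul_d, ← Nat.mod_mod_of_dvd i hd, hm₁, Nat.mod_mod_of_dvd k hd, hm₂]
  · calc i / ((π₁ * π₂).b * (π₁ * π₂).d) = i / (π₁.b * π₁.d) := by rw [h.mul_b_mul_d]
      _ = k / (π₁.c * π₁.d) := hq₁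
      _ = k / (π₂.b * π₂.d) / (π₂.a / π₁.a) := by
        rw [h.c_mul_d, Nat.div_div_eq_div_mul, mul_comm]
      _ = j / (π₂.c * π₂.d) / (π₂.a / π₁.a) := by rw [hq₂]
      _ = j / ((π₁ * π₂).c * (π₁ * π₂).d) := by
        rw [h.mul_c_mul_d, Nat.div_div_eq_div_mul, mul_comm]

lemma isFactorN_nmul (h : Chainable π₁ π₂) {X Y : ℕ → ℕ → ℂ} (hX : IsFactorN π₁ X)
    (hY : IsFactorN π₂ Y) :
    IsFactorN (π₁ * π₂) (nmul X Y) :=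
  hX.nmul_of_spatN hY fun _ _ _ => h.spatN_mul_ne_zero

end Chainable

end Pattern

open Pattern

section pprod

variable {π : ℕ → Pattern}

lemma pprod_a (q k : ℕ) : (pprod π q k).a = (π q).a := by
  induction k with
  | zero => rfl
  | succ k ih => exact ih

lemma pprod_zero_succ (k : ℕ) : pprod π 0 (k + 1) = pprod π 0 k * π (k + 1) := by
  rw [pprod, Nat.zero_add]

lemma chainable_pprod {k : ℕ} (hch : ∀ ℓ ≤ k, Chainable (π ℓ) (π (ℓ + 1))) :
    Chainable (pprod π 0 k) (π (k + 1)) := by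
  induction k with
  | zero => exact hch 0 le_rfl
  | succ k ih =>
    rw [pprod_zero_succ]
    exact (ih fun ℓ hℓ => hch ℓ (by omega)).mul_left (hch (k + 1) le_rfl)

lemma pprod_b_mul_d {k : ℕ} (hch : ∀ ℓ < k, Chainable (π ℓ) (π (ℓ + 1))) :
    (pprod π 0 k).b * (pprod π 0 k).d = (π 0).b * (π 0).d := by
  induction k with
  | zero => rfl
  | succ k ih =>
    rw [pprod_zero_succ, (chainable_pprod fun ℓ hℓ => hch ℓ (by omega)).mul_b_mul_d,
      ih fun ℓ hℓ => hch ℓ (by omega)]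

-- Not stated for `pprod π 0 0 = π 0`: there `b * d / d` and `a * c / a` need `0 < d`, `0 < a`.
lemma pprod_zero_succ_eq {k : ℕ} (hch : ∀ ℓ ≤ k, Chainable (π ℓ) (π (ℓ + 1))) :
    pprod π 0 (k + 1) =
      ⟨(π 0).a, (π 0).b * (π 0).d / (π (k + 1)).d,
        (π (k + 1)).a * (π (k + 1)).c / (π 0).a, (π (k + 1)).d⟩ := by
  rw [pprod_zero_succ, ← pprod_b_mul_d fun ℓ hℓ => hch ℓ hℓ.le, ← pprod_a 0 k]
  rfl

lemma isFactorN_nprod {k : ℕ} (hch : ∀ ℓ < k, Chainable (π ℓ) (π (ℓ + 1)))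
    {X : ℕ → ℕ → ℕ → ℂ} (hX : ∀ ℓ ≤ k, IsFactorN (π ℓ) (X ℓ)) :
    IsFactorN (pprod π 0 k) (nprod X k) := by
  induction k with
  | zero => exact hX 0 le_rfl
  | succ k ih =>
    rw [pprod_zero_succ]
    exact (chainable_pprod fun ℓ hℓ => hch ℓ (by omega)).isFactorN_nmul
      (ih (fun ℓ hℓ => hch ℓ (by omega)) fun ℓ hℓ => hX ℓ (by omega)) (hX (k + 1) le_rfl)

end pprod

theorem butterfly_subset_factor_general (L : ℕ) (hL : 2 ≤ L) (π : ℕ → Pattern)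
    (hch : ∀ ℓ, ℓ + 1 < L → Pattern.Chainable (π ℓ) (π (ℓ + 1))) :
    pprod π 0 (L - 1) =
      ⟨(π 0).a, (π 0).b * (π 0).d / (π (L - 1)).d,
        (π (L - 1)).a * (π (L - 1)).c / (π 0).a, (π (L - 1)).d⟩ ∧
    ∀ X : ℕ → ℕ → ℕ → ℂ, (∀ ℓ < L, IsFactorN (π ℓ) (X ℓ)) →
      IsFactorN (pprod π 0 (L - 1)) (nprod X (L - 1)) := by
  obtain ⟨k, rfl⟩ : ∃ k, L = k + 2 := ⟨L - 2, by omega⟩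
  exact ⟨pprod_zero_succ_eq fun ℓ hℓ => hch ℓ (by omega),
    fun X hX => isFactorN_nprod (fun ℓ hℓ => hch ℓ (by omega)) fun ℓ hℓ => hX ℓ (by omega)⟩

/-- **Lemma.** For a chainable architecture `β = (π 0, …, π (L-1))` of depth `L ≥ 2`,
`π 0 * ⋯ * π (L-1) = (a₁, b₁d₁/d_L, a_Lc_L/a₁, d_L)`, and every product of `π ℓ`-factors is
a `(π 0 * ⋯ * π (L-1))`-factor. -/
theorem butterfly_subset_factor (L : ℕ) (hL : 2 ≤ L) (π : ℕ → Pattern)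
    (hPos : ∀ ℓ < L, (π ℓ).Pos)
    (hch : ∀ ℓ, ℓ + 1 < L → Pattern.Chainable (π ℓ) (π (ℓ + 1))) :
    pprod π 0 (L - 1) =
      ⟨(π 0).a, (π 0).b * (π 0).d / (π (L - 1)).d,
        (π (L - 1)).a * (π (L - 1)).c / (π 0).a, (π (L - 1)).d⟩ ∧
    ∀ X : ℕ → ℕ → ℕ → ℂ, (∀ ℓ < L, IsFactorN (π ℓ) (X ℓ)) →
      IsFactorN (pprod π 0 (L - 1)) (nprod X (L - 1)) :=
  butterfly_subset_factor_general L hL π hch
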